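/- Let y₁,…,y_T ∈ ℝⁿ and δ₁,…,δ_T ∈ ℝᵐ be all nonzero, and suppose the per-token magnitudes are equal: ‖δ_t‖·‖y_t‖ = w₀ > 0 for all t. Define κ = E_{s≠t}[cos(y_t,y_s)·cos(δ_t,δ_s)], the uniform average over ordered pairs (s,t) with s ≠ t. Then the alignment amplification satisfies 𝒜 − 1 = (T−1)·κ. -/

import Mathlib

/-! The squared Frobenius norm of `∑ₜ δₜ yₜᵀ` is the double sum `∑ₜ,ₛ ⟨δₜ,δₛ⟩⟨yₜ,yₛ⟩`; its
diagonal is the denominator of `𝒜`. When every `‖δₜ‖‖yₜ‖` equals `w₀`, each off-diagonal term is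
`w₀²` times the product of cosines, so `𝒜 − 1` is the off-diagonal cosine sum divided by `T`,
which is `(T − 1)κ`. -/

open Matrix

/-- The Euclidean inner product on `ℝ^n`. -/
def edot {n : ℕ} (u v : Fin n → ℝ) : ℝ := ∑ i, u i * v i

/-- The Euclidean norm of a vector in `ℝ^n`. -/
noncomputable def enormR {n : ℕ} (v : Fin n → ℝ) : ℝ :=
  Real.sqrt (∑ i, v i ^ 2)

/-- The Frobenius norm of a real matrix. -/
noncomputable def frob {m n : ℕ} (M : Matrix (Fin m) (Fin n) ℝ) : ℝ :=
  Real.sqrt (∑ i, ∑ j, M i j ^ 2)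

/-- The cosine of the angle between two vectors: `cos(u,v) = ⟨u,v⟩/(‖u‖‖v‖)`. -/
noncomputable def cosang {n : ℕ} (u v : Fin n → ℝ) : ℝ :=
  edot u v / (enormR u * enormR v)

open Finset

lemma enormR_sq_eq_edot {n : ℕ} (v : Fin n → ℝ) : enormR v ^ 2 = edot v v := by
  rw [enormR, Real.sq_sqrt (by positivity), edot]
  simp only [sq]

lemma cosang_mul_cosang_eq_div_sq {n m : ℕ} {y y' : Fin n → ℝ} {δ δ' : Fin m → ℝ} {w : ℝ}
    (h : enormR δ * enormR y = w) (h' : enormR δ' * enormR y' = w) :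
    cosang y y' * cosang δ δ' = edot δ δ' * edot y y' / w ^ 2 := by
  have hw : w ^ 2 = enormR y * enormR y' * (enormR δ * enormR δ') := by
    rw [sq]; nth_rewrite 1 [← h]; rw [← h']; ring
  rw [cosang, cosang, div_mul_div_comm, hw, mul_comm (edot y y')]

lemma sum_sum_eq_sum_diag_add_sum_sum_erase {ι M : Type*} [Fintype ι] [DecidableEq ι]
    [AddCommMonoid M] (f : ι → ι → M) :
    ∑ t, ∑ s, f t s = ∑ t, f t t + ∑ t, ∑ s ∈ univ.erase t, f t s := by
  rw [← sum_add_distrib]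
  exact sum_congr rfl fun t _ => (add_sum_erase _ _ (mem_univ t)).symm

lemma sub_one_mul_sum_sum_erase_div {T : ℕ} (f : Fin T → Fin T → ℝ) :
    ((T : ℝ) - 1) * ((∑ t, ∑ s ∈ univ.erase t, f t s) / ((T : ℝ) * ((T : ℝ) - 1)))
      = (∑ t, ∑ s ∈ univ.erase t, f t s) / T := by
  rcases eq_or_ne (T : ℝ) 1 with hT | hT
  · -- the off-diagonal sum is empty, so the junk value `0 / 0` on the left is harmless
    have hT' : T = 1 := by exact_mod_cast hT
    subst hT'
    simp
  · rw [← mul_div_assoc, mul_comm (T : ℝ), mul_div_mul_left _ _ (sub_ne_zero.mpr hT)]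

section

variable {T n m : ℕ} (y : Fin T → Fin n → ℝ) (δ : Fin T → Fin m → ℝ)

lemma frob_sum_vecMulVec_sq :
    frob (∑ t, vecMulVec (δ t) (y t)) ^ 2 = ∑ t, ∑ s, edot (δ t) (δ s) * edot (y t) (y s) := by
  rw [frob, Real.sq_sqrt (by positivity)]
  simp only [Matrix.sum_apply, vecMulVec_apply, edot, sq, sum_mul_sum, mul_mul_mul_comm]
  simp_rw [sum_comm (s := (univ : Finset (Fin m))), sum_comm (s := (univ : Finset (Fin n)))]

lemma frob_sum_vecMulVec_sq_eq_diag_add_offDiag :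
    frob (∑ t, vecMulVec (δ t) (y t)) ^ 2
      = ∑ t, enormR (δ t) ^ 2 * enormR (y t) ^ 2
        + ∑ t, ∑ s ∈ univ.erase t, edot (δ t) (δ s) * edot (y t) (y s) := by
  simp only [frob_sum_vecMulVec_sq, sum_sum_eq_sum_diag_add_sum_sum_erase, enormR_sq_eq_edot]

end

theorem alignment_amplification_equal_magnitude_general {T n m : ℕ} (hT : 1 ≤ T)
    (y : Fin T → Fin n → ℝ) (δ : Fin T → Fin m → ℝ)
    (w₀ : ℝ) (hw₀ : 0 < w₀)
    (hmag : ∀ t, enormR (δ t) * enormR (y t) = w₀)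
    (κ : ℝ)
    (hκ : κ = (∑ t, ∑ s ∈ Finset.univ.erase t, cosang (y t) (y s) * cosang (δ t) (δ s))
            / ((T : ℝ) * ((T : ℝ) - 1))) :
    frob (∑ t, Matrix.vecMulVec (δ t) (y t)) ^ 2
        / (∑ t, enormR (δ t) ^ 2 * enormR (y t) ^ 2) - 1 =
      ((T : ℝ) - 1) * κ := by
  have hdiag : ∑ t, enormR (δ t) ^ 2 * enormR (y t) ^ 2 = T * w₀ ^ 2 := by
    simp [← mul_pow, hmag]
  have hcos : ∀ t s, cosang (y t) (y s) * cosang (δ t) (δ s)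
      = edot (δ t) (δ s) * edot (y t) (y s) / w₀ ^ 2 := fun t s =>
    cosang_mul_cosang_eq_div_sq (hmag t) (hmag s)
  have hT₀ : (T : ℝ) ≠ 0 := Nat.cast_ne_zero.mpr (Nat.one_le_iff_ne_zero.mp hT)
  have hw₀' : w₀ ≠ 0 := hw₀.ne'
  rw [hκ, sub_one_mul_sum_sum_erase_div, frob_sum_vecMulVec_sq_eq_diag_add_offDiag, hdiag]
  simp only [hcos, ← sum_div]
  field_simp
  ring

/-- **Equal-magnitude specialization of the alignment-amplification law.** If
all per-token magnitudes are equal (`‖δ_t‖‖y_t‖ = w₀ > 0`), then with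
`κ = E_{s≠t}[cos(y_t,y_s)cos(δ_t,δ_s)]` (uniform average over the `T(T−1)`
ordered pairs `s ≠ t`), the alignment amplification satisfies `𝒜 − 1 = (T−1)·κ`. -/
theorem alignment_amplification_equal_magnitude {T n m : ℕ} (hT : 1 ≤ T)
    (y : Fin T → Fin n → ℝ) (δ : Fin T → Fin m → ℝ)
    (hy : ∀ t, y t ≠ 0) (hδ : ∀ t, δ t ≠ 0)
    (w₀ : ℝ) (hw₀ : 0 < w₀)
    (hmag : ∀ t, enormR (δ t) * enormR (y t) = w₀)
    (κ : ℝ)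
    (hκ : κ = (∑ t, ∑ s ∈ Finset.univ.erase t, cosang (y t) (y s) * cosang (δ t) (δ s))
            / ((T : ℝ) * ((T : ℝ) - 1))) :
    frob (∑ t, Matrix.vecMulVec (δ t) (y t)) ^ 2
        / (∑ t, enormR (δ t) ^ 2 * enormR (y t) ^ 2) - 1 =
      ((T : ℝ) - 1) * κ :=
  alignment_amplification_equal_magnitude_general hT y δ w₀ hw₀ hmag κ hκ
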